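/- arXiv:1107.1571 — 4 statements merged into one kernel-verified Lean document; each statement's English description precedes it below -/
import Mathlib

section
/- There is a constant c > 0, depending only on n and Δ, such that for every integer m ≥ 2 the Lebesgue outer measure of [0,1] ∖ 𝒜_m is at most c·m^{1+2Δ−n}. -/
open Filter Finset MeasureTheory

/-- An approximant to a real number `t`: a reduced fraction `u/q` with `q ≥ 1`
and `|t - u/q| < 1/q²`. -/
def IsApproximant (t : ℝ) (u q : ℤ) : Prop :=
  1 ≤ q ∧ Int.gcd u q = 1 ∧ |t - (u : ℝ) / (q : ℝ)| < 1 / (q : ℝ) ^ 2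

/-- The set `𝒜_m`: `t ∈ [0,1]` such that for every real `M ≥ m` there is an
approximant `u/q` to `t` with `M^Δ < q ≤ M^(n-Δ)`. -/
def Aset (n : ℕ) (Δ : ℝ) (m : ℤ) : Set ℝ :=
  {t | t ∈ Set.Icc (0 : ℝ) 1 ∧ ∀ M : ℝ, (m : ℝ) ≤ M →
    ∃ u q : ℤ, IsApproximant t u q ∧ M ^ Δ < (q : ℝ) ∧ (q : ℝ) ≤ M ^ ((n : ℝ) - Δ)}

/-- The set `𝒜`: `t ∈ [0,1]` such that for all sufficiently large `M` there is an
approximant `u/q` to `t` with `M^Δ < q ≤ M^(n-Δ)`. -/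
def Aall (n : ℕ) (Δ : ℝ) : Set ℝ :=
  {t | t ∈ Set.Icc (0 : ℝ) 1 ∧ ∃ M₀ : ℝ, ∀ M : ℝ, M₀ ≤ M →
    ∃ u q : ℤ, IsApproximant t u q ∧ M ^ Δ < (q : ℝ) ∧ (q : ℝ) ≤ M ^ ((n : ℝ) - Δ)}

/-- The set `ℬ_{m,α}`: `t ∈ (0,1]` such that for every real `M ≥ m·t^(-α)` there is an
approximant `u/q` to `t` with `M^Δ < q ≤ M^(n-Δ)`. -/
def Bset (n : ℕ) (Δ : ℝ) (m : ℤ) (α : ℝ) : Set ℝ :=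
  {t | t ∈ Set.Ioc (0 : ℝ) 1 ∧ ∀ M : ℝ, (m : ℝ) * t ^ (-α) ≤ M →
    ∃ u q : ℤ, IsApproximant t u q ∧ M ^ Δ < (q : ℝ) ∧ (q : ℝ) ≤ M ^ ((n : ℝ) - Δ)}

/-! If some `M ≥ m` admits no approximant with `M^Δ < q ≤ M^(n-Δ)`, Dirichlet's theorem with
`N = ⌊M^(n-Δ)⌋` still yields a reduced `u/q` with `q ≤ N` and `|t - u/q| ≤ 1/(q(N+1))`, so in fact
`q ≤ M^Δ`. Hence `t` lies within `M^(Δ-n)/q` of a fraction of denominator at most `M^Δ`, a set of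
measure `O(M^(2Δ-n))`. Splitting `M ≥ m` into dyadic ranges `[m 2^j, m 2^(j+1))` and summing the
resulting geometric series bounds the exceptional set by `O(m^(2Δ-n)) ≤ O(m^(1+2Δ-n))`. -/

theorem measure_iUnion_le_of_le_geometric {α : Type*} [MeasurableSpace α] {μ : Measure α}
    {s : ℕ → Set α} {a r : ℝ} (hr0 : 0 ≤ r) (hr1 : r < 1)
    (h : ∀ j, μ (s j) ≤ ENNReal.ofReal (a * r ^ j)) :
    μ (⋃ j, s j) ≤ ENNReal.ofReal (a / (1 - r)) := by
  calc μ (⋃ j, s j) ≤ ∑' j, ENNReal.ofReal a * ENNReal.ofReal r ^ j :=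
        (measure_iUnion_le s).trans (ENNReal.tsum_le_tsum fun j => (h j).trans_eq
          (by rw [ENNReal.ofReal_mul' (by positivity), ENNReal.ofReal_pow hr0]))
    _ = ENNReal.ofReal (a / (1 - r)) := by
        rw [ENNReal.tsum_mul_left, ENNReal.tsum_geometric, ENNReal.ofReal_div_of_pos (by linarith),
          div_eq_mul_inv, ENNReal.ofReal_sub _ hr0, ENNReal.ofReal_one]

theorem isApproximant_num_den {t : ℝ} {r : ℚ} (h : |t - r| < 1 / (r.den : ℝ) ^ 2) :
    IsApproximant t r.num r.den := by
  refine ⟨mod_cast r.den_pos, r.reduced, ?_⟩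
  push_cast
  rwa [← Rat.cast_def]

-- Numerators outside `[-1, q+1]` give balls missing `[0,1]` once `ε ≤ 1`.
def nearFractions (Q : ℕ) (ε : ℝ) : Set ℝ :=
  ⋃ q ∈ Finset.Icc 1 Q, ⋃ u ∈ Finset.Icc (-1 : ℤ) (q + 1),
    Metric.closedBall ((u : ℝ) / q) (ε / q)

theorem nearFractions_mono {Q Q' : ℕ} {ε ε' : ℝ} (hQ : Q ≤ Q') (hε : ε ≤ ε') :
    nearFractions Q ε ⊆ nearFractions Q' ε' := by
  intro t ht
  simp only [nearFractions, Set.mem_iUnion, Finset.mem_Icc] at ht ⊢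
  obtain ⟨q, hq, u, hu, htu⟩ := ht
  exact ⟨q, ⟨hq.1, hq.2.trans hQ⟩, u, hu,
    Metric.closedBall_subset_closedBall (div_le_div_of_nonneg_right hε q.cast_nonneg) htu⟩

theorem volume_nearFractions_le (Q : ℕ) {ε : ℝ} (hε : 0 ≤ ε) :
    volume (nearFractions Q ε) ≤ ENNReal.ofReal (8 * Q * ε) := by
  calc volume (nearFractions Q ε)
      ≤ ∑ q ∈ Finset.Icc 1 Q, ∑ u ∈ Finset.Icc (-1 : ℤ) (q + 1),
          volume (Metric.closedBall ((u : ℝ) / q) (ε / q)) :=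
        (measure_biUnion_finset_le _ _).trans
          (Finset.sum_le_sum fun _ _ => measure_biUnion_finset_le _ _)
    _ = ENNReal.ofReal (∑ q ∈ Finset.Icc 1 Q, ((q : ℝ) + 3) * (2 * (ε / q))) := by
        rw [ENNReal.ofReal_sum_of_nonneg fun q _ => by positivity]
        refine Finset.sum_congr rfl fun q _ => ?_
        rw [ENNReal.ofReal_mul (by positivity)]
        simp only [Real.volume_closedBall, Finset.sum_const, Int.card_Icc, nsmul_eq_mul]
        congr
        rw [show (q : ℤ) + 1 + 1 - -1 = ((q + 3 : ℕ) : ℤ) by push_cast; ring, Int.toNat_natCast]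
        norm_cast
    _ ≤ ENNReal.ofReal (8 * Q * ε) := by
        refine ENNReal.ofReal_le_ofReal ?_
        calc ∑ q ∈ Finset.Icc 1 Q, ((q : ℝ) + 3) * (2 * (ε / q))
            ≤ ∑ q ∈ Finset.Icc 1 Q, 8 * ε := Finset.sum_le_sum fun q hq => by
              have hq : (1 : ℝ) ≤ q := by exact_mod_cast (Finset.mem_Icc.mp hq).1
              rw [← mul_assoc, mul_div_assoc', div_le_iff₀ (by positivity)]
              nlinarith
          _ = 8 * Q * ε := by simp; ring

theorem mem_nearFractions_of_not_exists_isApproximant {t X Y : ℝ} (ht : t ∈ Set.Icc (0 : ℝ) 1)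
    (hY : 1 ≤ Y) (h : ¬∃ u q : ℤ, IsApproximant t u q ∧ X < q ∧ (q : ℝ) ≤ Y) :
    t ∈ nearFractions ⌊X⌋₊ Y⁻¹ := by
  have hN : 0 < ⌊Y⌋₊ := Nat.floor_pos.mpr hY
  obtain ⟨r, hr, hrN⟩ := Real.exists_rat_abs_sub_le_and_den_le t hN
  have hq : (1 : ℝ) ≤ r.den := mod_cast r.den_pos
  have hqY : (r.den : ℝ) ≤ Y := (Nat.cast_le.mpr hrN).trans (Nat.floor_le (by linarith))
  have hYN : Y < ⌊Y⌋₊ + 1 := Nat.lt_floor_add_one Y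
  have hclose : |t - r| ≤ Y⁻¹ / r.den := by
    refine hr.trans ?_
    rw [one_div, mul_inv, div_eq_mul_inv]
    gcongr
  have happrox : IsApproximant t r.num r.den := by
    refine isApproximant_num_den (hr.trans_lt ?_)
    rw [sq]
    gcongr
    exact_mod_cast Nat.lt_succ_of_le hrN
  have hqX : (r.den : ℝ) ≤ X := by
    by_contra hX
    exact h ⟨r.num, r.den, happrox, by exact_mod_cast not_le.mp hX, by exact_mod_cast hqY⟩
  have hnum : |r.den * t - r.num| ≤ 1 := by
    have hfactor : (r.den : ℝ) * t - r.num = r.den * (t - r) := by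
      rw [Rat.cast_def]
      field_simp
    calc |r.den * t - r.num| = r.den * |t - r| := by
          rw [hfactor, abs_mul, Nat.abs_cast]
      _ ≤ r.den * (Y⁻¹ / r.den) := by gcongr
      _ ≤ 1 := by rw [mul_div_cancel₀ _ (by positivity)]; exact inv_le_one_of_one_le₀ hY
  obtain ⟨hnum_lb, hnum_ub⟩ := abs_le.mp hnum
  simp only [nearFractions, Set.mem_iUnion, Finset.mem_Icc]
  refine ⟨r.den, ⟨r.den_pos, Nat.le_floor hqX⟩, r.num, ⟨?_, ?_⟩, ?_⟩
  · have : (-1 : ℝ) ≤ r.num := by nlinarith [ht.1]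
    exact_mod_cast this
  · have : (r.num : ℝ) ≤ r.den + 1 := by nlinarith [ht.2]
    exact_mod_cast this
  · rwa [Metric.mem_closedBall, Real.dist_eq, ← Rat.cast_def]

theorem diff_Aset_subset_iUnion_nearFractions {n : ℕ} {Δ : ℝ} {m : ℤ} (hm : 1 ≤ m)
    (hΔ0 : 0 ≤ Δ) (hΔn : Δ ≤ n) :
    Set.Icc (0 : ℝ) 1 \ Aset n Δ m ⊆
      ⋃ j : ℕ, nearFractions ⌊((m : ℝ) * 2 ^ (j + 1)) ^ Δ⌋₊
        (((m : ℝ) * 2 ^ j) ^ ((n : ℝ) - Δ))⁻¹ := by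
  rintro t ⟨ht, hA⟩
  simp only [Aset, Set.mem_ofPred_eq, not_and, not_forall] at hA
  obtain ⟨M, hmM, hM⟩ := hA ht
  have hm0 : (0 : ℝ) < m := by exact_mod_cast hm
  obtain ⟨j, hjM, hMj⟩ := exists_nat_pow_near ((one_le_div hm0).mpr hmM) one_lt_two
  rw [le_div_iff₀ hm0, mul_comm] at hjM
  rw [div_lt_iff₀ hm0, mul_comm] at hMj
  have hM1 : 1 ≤ M ^ ((n : ℝ) - Δ) :=
    Real.one_le_rpow ((by exact_mod_cast hm : (1 : ℝ) ≤ m).trans hmM) (sub_nonneg.mpr hΔn)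
  have hjm : 0 < (m : ℝ) * 2 ^ j := by positivity
  refine Set.mem_iUnion.mpr ⟨j, nearFractions_mono ?_ ?_
    (mem_nearFractions_of_not_exists_isApproximant ht hM1 hM)⟩
  · exact Nat.floor_le_floor (Real.rpow_le_rpow (hjm.le.trans hjM) hMj.le hΔ0)
  · exact inv_anti₀ (Real.rpow_pos_of_pos hjm _)
      (Real.rpow_le_rpow hjm.le hjM (sub_nonneg.mpr hΔn))

theorem volume_nearFractions_dyadic_le {x : ℝ} (hx : 0 < x) (a b : ℝ) (j : ℕ) :
    volume (nearFractions ⌊(x * 2 ^ (j + 1)) ^ b⌋₊ ((x * 2 ^ j) ^ a)⁻¹) ≤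
      ENNReal.ofReal (8 * 2 ^ b * x ^ (b - a) * (2 ^ (b - a)) ^ j) := by
  refine (volume_nearFractions_le _ (by positivity)).trans (ENNReal.ofReal_le_ofReal ?_)
  have hratio : (x * 2 ^ j) ^ b * ((x * 2 ^ j) ^ a)⁻¹ = x ^ (b - a) * (2 ^ (b - a)) ^ j := by
    rw [← Real.rpow_neg (by positivity), ← Real.rpow_add (by positivity), ← sub_eq_add_neg,
      Real.mul_rpow hx.le (by positivity), Real.rpow_pow_comm zero_le_two]
  calc 8 * (⌊(x * 2 ^ (j + 1)) ^ b⌋₊ : ℝ) * ((x * 2 ^ j) ^ a)⁻¹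
      ≤ 8 * (x * 2 ^ (j + 1)) ^ b * ((x * 2 ^ j) ^ a)⁻¹ := by
        gcongr
        exact Nat.floor_le (by positivity)
    _ = 8 * 2 ^ b * ((x * 2 ^ j) ^ b * ((x * 2 ^ j) ^ a)⁻¹) := by
        rw [pow_succ, ← mul_assoc, Real.mul_rpow (by positivity) zero_le_two]
        ring
    _ = 8 * 2 ^ b * x ^ (b - a) * (2 ^ (b - a)) ^ j := by
        rw [hratio]
        ring

theorem stmt2_general (n : ℕ) (hn : 2 ≤ n) (Δ : ℝ) (hΔ0 : 0 < Δ) (hΔ1 : Δ < 1) :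
    ∃ c : ℝ, 0 < c ∧ ∀ m : ℤ, 2 ≤ m →
      volume (Set.Icc (0 : ℝ) 1 \ Aset n Δ m) ≤
        ENNReal.ofReal (c * (m : ℝ) ^ (1 + 2 * Δ - (n : ℝ))) := by
  have hn' : (2 : ℝ) ≤ n := by exact_mod_cast hn
  set r : ℝ := 2 ^ (Δ - (n - Δ))
  have hr0 : 0 ≤ r := by positivity
  have hr1 : r < 1 := Real.rpow_lt_one_of_one_lt_of_neg one_lt_two (by linarith)
  refine ⟨8 * 2 ^ Δ / (1 - r), div_pos (by positivity) (by linarith), fun m hm => ?_⟩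
  have hm1 : (1 : ℝ) ≤ m := by exact_mod_cast (by omega : 1 ≤ m)
  calc volume (Set.Icc (0 : ℝ) 1 \ Aset n Δ m)
      ≤ volume (⋃ j : ℕ, nearFractions ⌊((m : ℝ) * 2 ^ (j + 1)) ^ Δ⌋₊
          (((m : ℝ) * 2 ^ j) ^ ((n : ℝ) - Δ))⁻¹) :=
        measure_mono (diff_Aset_subset_iUnion_nearFractions (by omega) hΔ0.le (by linarith))
    _ ≤ ENNReal.ofReal (8 * 2 ^ Δ * (m : ℝ) ^ (Δ - (n - Δ)) / (1 - r)) :=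
        measure_iUnion_le_of_le_geometric hr0 hr1
          (volume_nearFractions_dyadic_le (by positivity) _ _)
    _ ≤ ENNReal.ofReal (8 * 2 ^ Δ / (1 - r) * (m : ℝ) ^ (1 + 2 * Δ - (n : ℝ))) := by
        refine ENNReal.ofReal_le_ofReal ?_
        rw [mul_div_right_comm]
        exact mul_le_mul_of_nonneg_left (Real.rpow_le_rpow_of_exponent_le hm1 (by linarith))
          (div_nonneg (by positivity) (by linarith))

/-- there is `c > 0`, depending only on `n` and `Δ`, such that for every
integer `m ≥ 2` the Lebesgue (outer) measure of `[0,1] \ 𝒜_m` is at most `c·m^(1+2Δ-n)`. -/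
theorem stmt2 (n : ℕ) (hn : 2 ≤ n) (Δ : ℝ) (hΔ0 : 0 < Δ) (hΔ1 : Δ < 1)
    (hΔ2 : n = 2 → Δ < 1 / 2) :
    ∃ c : ℝ, 0 < c ∧ ∀ m : ℤ, 2 ≤ m →
      volume (Set.Icc (0 : ℝ) 1 \ Aset n Δ m) ≤
        ENNReal.ofReal (c * (m : ℝ) ^ (1 + 2 * Δ - (n : ℝ))) :=
  stmt2_general n hn Δ hΔ0 hΔ1
end

section
/- The set [0,1] ∖ 𝒜 is a Lebesgue null set; equivalently, 𝒜 has full Lebesgue measure 1 in [0,1]. -/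
open Filter Finset MeasureTheory

open Topology

/-!
By Dirichlet's theorem, for every `N ≥ 1` there is a reduced fraction `u/q` with `q ≤ N` and
`|t - u/q| ≤ 1/(q(N+1)) < 1/q²`; take `N = ⌊M^(n-Δ)⌋`. If moreover `t` is irrational and not
Liouville with exponent `s`, then `c/q^s ≤ |t - u/q|` for some `c > 0`, which forces
`q^(s-1) ≥ c(N+1)`, and this exceeds `M^(Δ(s-1))` for large `M` as soon as `Δ(s-1) < n - Δ`.
The choice `s = 3 - Δ > 2` satisfies this because `(1 - Δ)(2 - Δ) > 0`, and almost every real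
number is irrational and not Liouville with any exponent `s > 2`.
-/

namespace Irrational

variable {t : ℝ}

lemma exists_pos_le_abs_sub_div (ht : Irrational t) {q : ℕ} (hq : q ≠ 0) :
    ∃ δ > 0, ∀ m : ℤ, δ ≤ |t - m / q| := by
  have hq' : (0 : ℝ) < q := by positivity
  have hround : 0 < |q * t - round (q * t)| :=
    abs_pos.2 (sub_ne_zero.2 ((ht.natCast_mul hq).ne_int _))
  refine ⟨|q * t - round (q * t)| / q, by positivity, fun m => ?_⟩
  rw [div_le_iff₀ hq', ← abs_of_pos hq', ← abs_mul, abs_of_pos hq']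
  calc |q * t - round (q * t)| ≤ |q * t - m| := round_le _ m
    _ = |(t - m / q) * q| := by congr 1; field_simp

lemma exists_pos_le_abs_sub_rat_of_den_lt (ht : Irrational t) (Q : ℕ) :
    ∃ ε > 0, ∀ r : ℚ, r.den < Q → ε ≤ |t - r| := by
  have hsmall : ∀ᶠ ε in 𝓝[>] (0 : ℝ), ∀ q ∈ range Q, ∀ m : ℤ, q ≠ 0 → ε ≤ |t - m / q| := by
    refine (eventually_all_finset _).2 fun q _ => ?_
    rcases eq_or_ne q 0 with rfl | hq
    · exact .of_forall fun _ _ h => absurd rfl h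
    obtain ⟨δ, hδ, hle⟩ := ht.exists_pos_le_abs_sub_div hq
    filter_upwards [nhdsWithin_le_nhds (eventually_le_nhds hδ)] with ε hε m _
    exact hε.trans (hle m)
  obtain ⟨ε, hε, hpos⟩ := (hsmall.and self_mem_nhdsWithin).exists
  refine ⟨ε, hpos, fun r hr => ?_⟩
  simpa only [Rat.cast_def] using hε r.den (mem_range.2 hr) r.num r.den_nz

lemma exists_pos_div_rpow_le_abs_sub_rat (ht : Irrational t) {s : ℝ} (hs : 0 ≤ s)
    (hL : ¬ LiouvilleWith s t) : ∃ c > 0, ∀ r : ℚ, c / (r.den : ℝ) ^ s ≤ |t - r| := by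
  have hlarge : ∀ᶠ q : ℕ in atTop, ∀ m : ℤ, t ≠ m / q → 1 / (q : ℝ) ^ s ≤ |t - m / q| := by
    simpa [LiouvilleWith, not_frequently] using fun h => hL ⟨1, h⟩
  obtain ⟨Q, hQ⟩ := eventually_atTop.1 hlarge
  obtain ⟨ε, hε, hsmall⟩ := ht.exists_pos_le_abs_sub_rat_of_den_lt Q
  refine ⟨min 1 ε, by positivity, fun r => ?_⟩
  have hden : 1 ≤ (r.den : ℝ) ^ s := Real.one_le_rpow (by exact_mod_cast r.pos) hs
  rcases lt_or_ge r.den Q with hr | hr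
  · calc min 1 ε / (r.den : ℝ) ^ s ≤ min 1 ε := div_le_self (by positivity) hden
      _ ≤ ε := min_le_right _ _
      _ ≤ |t - r| := hsmall r hr
  · have := hQ r.den hr r.num (by rw [← Rat.cast_def]; exact ht.ne_rat r)
    rw [Rat.cast_def]
    exact le_trans (by gcongr; exact min_le_left _ _) this

end Irrational

lemma eventually_exists_approximant {t s a b c : ℝ} (hs : 1 < s) (hb : 0 ≤ b)
    (hab : a * (s - 1) < b) (hc : 0 < c) (hdio : ∀ r : ℚ, c / (r.den : ℝ) ^ s ≤ |t - r|) :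
    ∀ᶠ M in atTop, ∃ u q : ℤ, IsApproximant t u q ∧ M ^ a < (q : ℝ) ∧ (q : ℝ) ≤ M ^ b := by
  filter_upwards [eventually_ge_atTop 1,
    (tendsto_rpow_atTop (sub_pos.2 hab)).eventually_ge_atTop (1 / c)] with M hM hMc
  set N := ⌊M ^ b⌋₊
  have hN : 0 < N := Nat.floor_pos.2 (Real.one_le_rpow hM hb)
  obtain ⟨r, hr, hrN⟩ := Real.exists_rat_abs_sub_le_and_den_le t hN
  have hQ : (0 : ℝ) < r.den := by exact_mod_cast r.pos
  have hQN : (r.den : ℝ) < N + 1 := by exact_mod_cast Nat.lt_succ_of_le hrN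
  have hcast : ((r.den : ℤ) : ℝ) = r.den := rfl
  refine ⟨r.num, r.den, ⟨by exact_mod_cast r.pos, by simpa [Int.gcd] using r.reduced, ?_⟩, ?_, ?_⟩
  · rw [hcast, ← Rat.cast_def]
    refine hr.trans_lt (one_div_lt_one_div_of_lt (by positivity) ?_)
    rw [sq]
    gcongr
  · have hden : c * (N + 1) ≤ (r.den : ℝ) ^ (s - 1) := by
      have h := (hdio r).trans hr
      rw [div_le_div_iff₀ (by positivity) (by positivity)] at h
      rw [Real.rpow_sub hQ, Real.rpow_one, le_div_iff₀ hQ]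
      linarith
    have hMb : M ^ (a * (s - 1)) ≤ c * M ^ b := by
      rw [Real.rpow_sub (by linarith), div_le_div_iff₀ hc (by positivity)] at hMc
      linarith
    rw [hcast, ← Real.rpow_lt_rpow_iff (by positivity) hQ.le (sub_pos.2 hs),
      ← Real.rpow_mul (by linarith)]
    calc M ^ (a * (s - 1)) ≤ c * M ^ b := hMb
      _ < c * (N + 1) := mul_lt_mul_of_pos_left (Nat.lt_floor_add_one _) hc
      _ ≤ _ := hden
  · exact (Nat.cast_le.2 hrN).trans (Nat.floor_le (by positivity))

theorem stmt3_general (n : ℕ) (hn : 2 ≤ n) (Δ : ℝ) (hΔ1 : Δ < 1) :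
    volume (Set.Icc (0 : ℝ) 1 \ Aall n Δ) = 0 := by
  have hn' : (2 : ℝ) ≤ n := by exact_mod_cast hn
  have hexp : Δ * (3 - Δ - 1) < n - Δ := by nlinarith
  rw [measure_eq_zero_iff_ae_notMem]
  filter_upwards [ae_not_liouvilleWith, (Set.countable_range ((↑) : ℚ → ℝ)).ae_notMem volume]
    with t hL hirr ⟨ht, hA⟩
  obtain ⟨c, hc, hdio⟩ :=
    Irrational.exists_pos_div_rpow_le_abs_sub_rat hirr (by linarith) (hL (3 - Δ) (by linarith))
  exact hA ⟨ht, eventually_atTop.1 <|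
    eventually_exists_approximant (by linarith) (by linarith) hexp hc hdio⟩

/-- `[0,1] \ 𝒜` is a Lebesgue null set. -/
theorem stmt3 (n : ℕ) (hn : 2 ≤ n) (Δ : ℝ) (hΔ0 : 0 < Δ) (hΔ1 : Δ < 1)
    (hΔ2 : n = 2 → Δ < 1 / 2) :
    volume (Set.Icc (0 : ℝ) 1 \ Aall n Δ) = 0 :=
  stmt3_general n hn Δ hΔ1
end

section
/- For every real α with 1/(n−Δ) < α < 1/Δ there is a constant c > 0, depending only on n, Δ and α, such that for every integer m ≥ 2 and every t₀ ∈ (0,1], the Lebesgue outer measure of [0,t₀] ∖ ℬ_{m,α} is at most c·t₀^{1+(n−1−2Δ)α}·m^{1+2Δ−n}; equivalently, the Lebesgue measure of ℬ_{m,α} ∩ [0,t₀] is at least t₀·(1 − c·t₀^{(n−1−2Δ)α}·m^{1+2Δ−n}). -/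
open Filter Finset MeasureTheory

/-!
By Dirichlet's theorem every `t` has, for each `R ≥ 1`, an approximant `u/q` with `q ≤ R` and
`|t - u/q| < 1/(qR)`. If `t` has no approximant with denominator in `(Q, R]`, then it lies within
`1/(qR)` of a fraction `p/q` with `q ≤ Q`, and on `[a, 2a]` these neighbourhoods have total length
at most `6aQ/R`. Taking `Q = M^Δ`, `R = M^(n-Δ)` gives `Q/R = M^(2Δ-n)` with `2Δ - n ≤ -1`, so
summing over dyadic ranges of `M ≥ m·(2a)^(-α)` and then over dyadic ranges `[a, 2a]` of `t`
gives two geometric series.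
-/

def HasApproximantIn (t Q R : ℝ) : Prop :=
  ∃ u q : ℤ, IsApproximant t u q ∧ Q < (q : ℝ) ∧ (q : ℝ) ≤ R

lemma HasApproximantIn.mono {t Q Q' R R' : ℝ} (h : HasApproximantIn t Q R) (hQ : Q' ≤ Q)
    (hR : R ≤ R') : HasApproximantIn t Q' R' := by
  obtain ⟨u, q, hq, hQq, hqR⟩ := h
  exact ⟨u, q, hq, hQ.trans_lt hQq, hqR.trans hR⟩

lemma exists_approximant_abs_sub_lt (t : ℝ) {R : ℝ} (hR : 1 ≤ R) :
    ∃ u q : ℤ, IsApproximant t u q ∧ (q : ℝ) ≤ R ∧ |t - u / q| < 1 / (q * R) := by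
  obtain ⟨r, hr, hden⟩ := Real.exists_rat_abs_sub_le_and_den_le t (Nat.floor_pos.mpr hR)
  have hdenR : (r.den : ℝ) ≤ R := (Nat.cast_le.mpr hden).trans (Nat.floor_le (by linarith))
  have herr : |t - r.num / r.den| < 1 / (r.den * R) := by
    rw [← Rat.cast_def]
    refine hr.trans_lt (one_div_lt_one_div_of_lt (by positivity) ?_)
    rw [mul_comm]
    exact mul_lt_mul_of_pos_right (Nat.lt_floor_add_one R) (by positivity)
  refine ⟨r.num, r.den, ⟨by exact_mod_cast r.pos, by simpa [Int.gcd] using r.reduced, ?_⟩, ?_,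
    ?_⟩ <;> rw [Int.cast_natCast]
  · refine herr.trans_le ?_
    rw [sq]
    gcongr
  · exact hdenR
  · exact herr

lemma exists_near_fraction_of_not_hasApproximantIn {a Q R t : ℝ} (hR : 1 ≤ R) (hRa : 1 / R ≤ a)
    (ht : t ∈ Set.Icc a (2 * a)) (h : ¬HasApproximantIn t Q R) :
    ∃ q ∈ Finset.Icc (1 : ℤ) ⌊Q⌋, ∃ p ∈ Finset.Icc (1 : ℤ) ⌊3 * a * q⌋,
      |t - p / q| < 1 / (q * R) := by
  obtain ⟨u, q, happ, hqR, herr⟩ := exists_approximant_abs_sub_lt t hR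
  have hq1 : (1 : ℝ) ≤ q := by exact_mod_cast happ.1
  have hqQ : (q : ℝ) ≤ Q := not_lt.mp fun hQq => h ⟨u, q, happ, hQq, hqR⟩
  have hrad : 1 / (q * R) ≤ a :=
    le_trans (one_div_le_one_div_of_le (by linarith) (by nlinarith)) hRa
  obtain ⟨hlo, hhi⟩ := abs_sub_lt_iff.mp herr
  have hu : (0 : ℝ) < u / q := by linarith [ht.1]
  have hu3 : (u : ℝ) / q < 3 * a := by linarith [ht.2]
  refine ⟨q, Finset.mem_Icc.mpr ⟨happ.1, Int.le_floor.mpr hqQ⟩, u, Finset.mem_Icc.mpr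
    ⟨?_, Int.le_floor.mpr ?_⟩, herr⟩
  · exact_mod_cast (div_pos_iff_of_pos_right (by linarith)).mp hu
  · exact ((div_lt_iff₀ (by linarith)).mp hu3).le

lemma measure_biUnion_Icc_one_floor_le {X : Type*} [MeasurableSpace X] (μ : Measure X)
    {x c : ℝ} (hx : 0 ≤ x) (hc : 0 ≤ c) (s : ℤ → Set X)
    (hs : ∀ p ∈ Finset.Icc (1 : ℤ) ⌊x⌋, μ (s p) ≤ ENNReal.ofReal c) :
    μ (⋃ p ∈ Finset.Icc (1 : ℤ) ⌊x⌋, s p) ≤ ENNReal.ofReal (x * c) := by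
  have hcard : ((Finset.Icc (1 : ℤ) ⌊x⌋).card : ℝ) ≤ x := by
    rw [Int.card_Icc, add_sub_cancel_right, Int.floor_toNat]
    exact Nat.floor_le hx
  calc μ (⋃ p ∈ Finset.Icc (1 : ℤ) ⌊x⌋, s p)
      ≤ ∑ p ∈ Finset.Icc (1 : ℤ) ⌊x⌋, μ (s p) := measure_biUnion_finset_le _ _
    _ ≤ (Finset.Icc (1 : ℤ) ⌊x⌋).card • ENNReal.ofReal c := Finset.sum_le_card_nsmul _ _ _ hs
    _ = ENNReal.ofReal ((Finset.Icc (1 : ℤ) ⌊x⌋).card * c) := by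
      rw [nsmul_eq_mul, ENNReal.ofReal_mul (by positivity), ENNReal.ofReal_natCast]
    _ ≤ ENNReal.ofReal (x * c) := ENNReal.ofReal_le_ofReal (by gcongr)

lemma volume_not_hasApproximantIn_le {a Q R : ℝ} (ha : 0 < a) (hQ : 0 ≤ Q) (hR : 1 ≤ R)
    (hRa : 1 / R ≤ a) :
    volume {t ∈ Set.Icc a (2 * a) | ¬HasApproximantIn t Q R} ≤
      ENNReal.ofReal (6 * a * Q / R) := by
  calc volume {t ∈ Set.Icc a (2 * a) | ¬HasApproximantIn t Q R}
      ≤ volume (⋃ q ∈ Finset.Icc (1 : ℤ) ⌊Q⌋, ⋃ p ∈ Finset.Icc (1 : ℤ) ⌊3 * a * q⌋,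
          Metric.ball ((p : ℝ) / q) (1 / (q * R))) := by
        refine measure_mono ?_
        rintro t ⟨ht, h⟩
        obtain ⟨q, hq, p, hp, hpq⟩ := exists_near_fraction_of_not_hasApproximantIn hR hRa ht h
        simp only [Set.mem_iUnion, Metric.mem_ball, Real.dist_eq]
        exact ⟨q, hq, p, hp, hpq⟩
    _ ≤ ENNReal.ofReal (Q * (6 * a / R)) := by
        refine measure_biUnion_Icc_one_floor_le _ hQ (by positivity) _ fun q hq => ?_
        have hq0 : (0 : ℝ) < q := by exact_mod_cast (Finset.mem_Icc.mp hq).1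
        refine (measure_biUnion_Icc_one_floor_le _ (by positivity) (by positivity) _
          fun p _ => (Real.volume_ball _ _).le).trans_eq ?_
        congr 1
        field_simp
        ring
    _ = ENNReal.ofReal (6 * a * Q / R) := by ring_nf

lemma measure_iUnion_le_of_le_geometric_s6 {X : Type*} [MeasurableSpace X] (μ : Measure X)
    {s : ℕ → Set X} {C r : ℝ} (hC : 0 ≤ C) (hr0 : 0 ≤ r) (hr : r ≤ 1 / 2)
    (hs : ∀ k, μ (s k) ≤ ENNReal.ofReal (C * r ^ k)) :
    μ (⋃ k, s k) ≤ ENNReal.ofReal (2 * C) := by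
  have hr1 : r < 1 := by linarith
  have hinv : (1 - r)⁻¹ ≤ 2 := by
    rw [inv_le_comm₀ (by linarith) (by norm_num)]
    linarith
  calc μ (⋃ k, s k) ≤ ∑' k, μ (s k) := measure_iUnion_le _
    _ ≤ ∑' k, ENNReal.ofReal (C * r ^ k) := ENNReal.tsum_le_tsum hs
    _ = ENNReal.ofReal (C * (1 - r)⁻¹) := by
      rw [← ENNReal.ofReal_tsum_of_nonneg (fun k => by positivity)
        ((summable_geometric_of_lt_one hr0 hr1).mul_left C), tsum_mul_left,
        tsum_geometric_of_lt_one hr0 hr1]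
    _ ≤ ENNReal.ofReal (2 * C) := by
      rw [mul_comm 2 C]
      exact ENNReal.ofReal_le_ofReal (mul_le_mul_of_nonneg_left hinv hC)

lemma exists_mul_two_pow_le_lt {N M : ℝ} (hN : 0 < N) (hNM : N ≤ M) :
    ∃ k : ℕ, N * 2 ^ k ≤ M ∧ M < N * 2 ^ (k + 1) := by
  obtain ⟨k, hk, hk'⟩ := exists_nat_pow_near ((one_le_div hN).mpr hNM) one_lt_two
  exact ⟨k, (le_div_iff₀' hN).mp hk, (div_lt_iff₀' hN).mp hk'⟩

lemma rpow_mul_two_pow_succ_div_rpow_mul_two_pow {N β γ : ℝ} (hN : 0 < N) (k : ℕ) :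
    (N * 2 ^ (k + 1)) ^ β / (N * 2 ^ k) ^ γ = 2 ^ β * N ^ (β - γ) * (2 ^ (β - γ)) ^ k := by
  have hX : 0 < N * 2 ^ k := by positivity
  rw [show N * 2 ^ (k + 1) = 2 * (N * 2 ^ k) by ring, Real.mul_rpow zero_le_two hX.le,
    mul_div_assoc, ← Real.rpow_sub hX, Real.mul_rpow hN.le (by positivity),
    ← Real.rpow_pow_comm zero_le_two, mul_assoc]

lemma volume_exists_not_hasApproximantIn_le {a N β γ : ℝ} (ha : 0 < a) (hN : 1 ≤ N)
    (hβ0 : 0 ≤ β) (hβ1 : β ≤ 1) (hβγ : β + 1 ≤ γ) (hNa : 1 / N ^ γ ≤ a) :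
    volume {t ∈ Set.Icc a (2 * a) | ∃ M, N ≤ M ∧ ¬HasApproximantIn t (M ^ β) (M ^ γ)} ≤
      ENNReal.ofReal (24 * a * N ^ (β - γ)) := by
  have hN0 : 0 < N := by linarith
  have hγ0 : 0 ≤ γ := by linarith
  have hsub : {t ∈ Set.Icc a (2 * a) | ∃ M, N ≤ M ∧ ¬HasApproximantIn t (M ^ β) (M ^ γ)} ⊆
      ⋃ k : ℕ, {t ∈ Set.Icc a (2 * a) |
        ¬HasApproximantIn t ((N * 2 ^ (k + 1)) ^ β) ((N * 2 ^ k) ^ γ)} := by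
    rintro t ⟨ht, M, hNM, hM⟩
    obtain ⟨k, hk, hk'⟩ := exists_mul_two_pow_le_lt hN0 hNM
    refine Set.mem_iUnion.mpr ⟨k, ht, fun h => hM (h.mono ?_ ?_)⟩
    · exact Real.rpow_le_rpow (by linarith) hk'.le hβ0
    · exact Real.rpow_le_rpow (by positivity) hk hγ0
  have hratio : (2 : ℝ) ^ (β - γ) ≤ 1 / 2 := by
    rw [one_div, ← Real.rpow_neg_one]
    exact Real.rpow_le_rpow_of_exponent_le one_le_two (by linarith)
  have h2β : (2 : ℝ) ^ β ≤ 2 :=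
    (Real.rpow_le_rpow_of_exponent_le one_le_two hβ1).trans_eq (Real.rpow_one 2)
  refine (measure_mono hsub).trans ((measure_iUnion_le_of_le_geometric_s6 _
    (C := 6 * a * (2 ^ β * N ^ (β - γ))) (by positivity) (by positivity) hratio
    fun k => ?_).trans (ENNReal.ofReal_le_ofReal ?_))
  · have hR : N ^ γ ≤ (N * 2 ^ k) ^ γ :=
      Real.rpow_le_rpow hN0.le (le_mul_of_one_le_right hN0.le (one_le_pow₀ one_le_two)) hγ0
    have hR1 : 1 ≤ N ^ γ := Real.one_le_rpow hN hγ0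
    refine (volume_not_hasApproximantIn_le ha (by positivity) (hR1.trans hR)
      ((one_div_le_one_div_of_le (by positivity) hR).trans hNa)).trans_eq ?_
    rw [mul_div_assoc, rpow_mul_two_pow_succ_div_rpow_mul_two_pow hN0]
    ring_nf
  · have : 0 ≤ a * N ^ (β - γ) := by positivity
    nlinarith

lemma volume_Icc_diff_Bset_le {n : ℕ} {Δ α : ℝ} {m : ℤ} {a : ℝ} (hΔ0 : 0 ≤ Δ) (hΔ1 : Δ ≤ 1)
    (hΔn : 2 * Δ + 1 ≤ n) (hα : 1 ≤ α * (n - Δ)) (hm : 2 ≤ m) (ha : 0 < a) (ha1 : 2 * a ≤ 1) :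
    volume (Set.Icc a (2 * a) \ Bset n Δ m α) ≤
      ENNReal.ofReal (12 * (m : ℝ) ^ (2 * Δ - n) * (2 * a) ^ (1 + (n - 2 * Δ) * α)) := by
  have hm2 : (2 : ℝ) ≤ m := by exact_mod_cast hm
  have h2a : 0 < 2 * a := by linarith
  have hα0 : 0 < α := by
    by_contra! h
    nlinarith
  set N : ℝ := m * (2 * a) ^ (-α) with hN
  have hpow : 1 ≤ (2 * a) ^ (-α) :=
    Real.one_le_rpow_of_pos_of_le_one_of_nonpos h2a ha1 (by linarith)
  have hN1 : 1 ≤ N := by nlinarith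
  have hNa : 1 / N ^ ((n : ℝ) - Δ) ≤ a := by
    have hmpow : 2 ≤ (m : ℝ) ^ ((n : ℝ) - Δ) :=
      hm2.trans (Real.self_le_rpow_of_one_le (by linarith) (by linarith))
    have hapow : (2 * a) ^ (-1 : ℝ) ≤ (2 * a) ^ (-α * (n - Δ)) :=
      Real.rpow_le_rpow_of_exponent_ge h2a ha1 (by linarith)
    rw [Real.rpow_neg_one] at hapow
    rw [hN, Real.mul_rpow (by linarith) (by positivity), ← Real.rpow_mul h2a.le,
      div_le_iff₀ (by positivity)]
    calc (1 : ℝ) = a * (2 * (2 * a)⁻¹) := by field_simp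
      _ ≤ a * ((m : ℝ) ^ ((n : ℝ) - Δ) * (2 * a) ^ (-α * (n - Δ))) := by gcongr
  have hsub : Set.Icc a (2 * a) \ Bset n Δ m α ⊆
      {t ∈ Set.Icc a (2 * a) | ∃ M, N ≤ M ∧ ¬HasApproximantIn t (M ^ Δ) (M ^ ((n : ℝ) - Δ))} := by
    rintro t ⟨ht, htB⟩
    have ht0 : 0 < t := ha.trans_le ht.1
    obtain ⟨M, hM, hMB⟩ : ∃ M, (m : ℝ) * t ^ (-α) ≤ M ∧
        ¬HasApproximantIn t (M ^ Δ) (M ^ ((n : ℝ) - Δ)) := by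
      by_contra! h
      exact htB ⟨⟨ht0, ht.2.trans ha1⟩, h⟩
    refine ⟨ht, M, le_trans ?_ hM, hMB⟩
    exact mul_le_mul_of_nonneg_left (Real.rpow_le_rpow_of_nonpos ht0 ht.2 (by linarith))
      (by linarith)
  refine (measure_mono hsub).trans ((volume_exists_not_hasApproximantIn_le ha hN1 hΔ0 hΔ1
    (by linarith) hNa).trans_eq (congrArg ENNReal.ofReal ?_))
  rw [hN, Real.mul_rpow (by linarith) (by positivity), ← Real.rpow_mul h2a.le,
    Real.rpow_add h2a, Real.rpow_one]
  ring_nf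

lemma volume_Icc_zero_diff_le_of_dyadic {S : Set ℝ} {C s t₀ : ℝ} (hC : 0 ≤ C) (hs : 1 ≤ s)
    (ht₀ : 0 < t₀) (h : ∀ a, 0 < a → 2 * a ≤ t₀ →
      volume (Set.Icc a (2 * a) \ S) ≤ ENNReal.ofReal (C * (2 * a) ^ s)) :
    volume (Set.Icc 0 t₀ \ S) ≤ ENNReal.ofReal (2 * C * t₀ ^ s) := by
  have hhalf (j : ℕ) : 2 * (t₀ / 2 ^ (j + 1)) = t₀ / 2 ^ j := by
    rw [pow_succ]
    field_simp
  have hsub : Set.Icc 0 t₀ \ S ⊆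
      {0} ∪ ⋃ j : ℕ, Set.Icc (t₀ / 2 ^ (j + 1)) (2 * (t₀ / 2 ^ (j + 1))) \ S := by
    rintro t ⟨⟨ht0, htt₀⟩, htS⟩
    rcases ht0.eq_or_lt with rfl | ht0
    · exact Or.inl rfl
    obtain ⟨j, hj, hj'⟩ := exists_mul_two_pow_le_lt ht0 htt₀
    refine Or.inr (Set.mem_iUnion.mpr ⟨j, ⟨?_, ?_⟩, htS⟩)
    · exact (div_le_iff₀ (by positivity)).mpr hj'.le
    · exact hhalf j ▸ (le_div_iff₀ (by positivity)).mpr hj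
  have h2s : (2 : ℝ) ≤ 2 ^ s := Real.self_le_rpow_of_one_le one_le_two hs
  refine (measure_mono hsub).trans ((measure_union_le _ _).trans ?_)
  rw [Real.volume_singleton, zero_add, mul_assoc]
  refine measure_iUnion_le_of_le_geometric_s6 _ (r := (2 ^ s)⁻¹) (by positivity) (by positivity)
    (by rw [one_div]; exact inv_anti₀ two_pos h2s) fun j => ?_
  refine (h _ (by positivity) ?_).trans_eq (congrArg ENNReal.ofReal ?_)
  · rw [hhalf]
    exact div_le_self ht₀.le (one_le_pow₀ one_le_two)
  · rw [hhalf, Real.div_rpow ht₀.le (by positivity), ← Real.rpow_pow_comm zero_le_two, inv_pow]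
    field_simp

theorem stmt6_general (n : ℕ) (hn : 2 ≤ n) (Δ : ℝ) (hΔ0 : 0 < Δ) (hΔ1 : Δ < 1)
    (hΔ2 : n = 2 → Δ < 1 / 2) (α : ℝ) (hα1 : ((n : ℝ) - Δ)⁻¹ < α) :
    ∃ c : ℝ, 0 < c ∧ ∀ m : ℤ, 2 ≤ m → ∀ t₀ : ℝ, t₀ ∈ Set.Ioc (0 : ℝ) 1 →
      volume (Set.Icc (0 : ℝ) t₀ \ Bset n Δ m α) ≤
        ENNReal.ofReal (c * t₀ ^ (1 + ((n : ℝ) - 1 - 2 * Δ) * α) *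
          (m : ℝ) ^ (1 + 2 * Δ - (n : ℝ))) := by
  have hΔn : 2 * Δ + 1 ≤ (n : ℝ) := by
    rcases hn.eq_or_lt with rfl | hn3
    · push_cast
      linarith [hΔ2 rfl]
    · have : (3 : ℝ) ≤ n := by exact_mod_cast hn3
      linarith
  have hα : 1 ≤ α * (n - Δ) := (inv_lt_iff_one_lt_mul₀ (by linarith)).mp hα1 |>.le
  have hα0 : 0 < α := by
    by_contra! h
    nlinarith
  refine ⟨24, by norm_num, fun m hm t₀ ⟨ht₀, ht₀1⟩ => ?_⟩
  have hm1 : (1 : ℝ) ≤ m := by exact_mod_cast (by linarith : (1 : ℤ) ≤ m)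
  have ht : t₀ ^ (1 + ((n : ℝ) - 2 * Δ) * α) ≤ t₀ ^ (1 + ((n : ℝ) - 1 - 2 * Δ) * α) :=
    Real.rpow_le_rpow_of_exponent_ge ht₀ ht₀1 (by nlinarith)
  have hm' : (m : ℝ) ^ (2 * Δ - n) ≤ (m : ℝ) ^ (1 + 2 * Δ - n) :=
    Real.rpow_le_rpow_of_exponent_le hm1 (by linarith)
  calc volume (Set.Icc 0 t₀ \ Bset n Δ m α)
      ≤ ENNReal.ofReal (2 * (12 * (m : ℝ) ^ (2 * Δ - n)) * t₀ ^ (1 + ((n : ℝ) - 2 * Δ) * α)) :=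
        volume_Icc_zero_diff_le_of_dyadic (by positivity) (by nlinarith) ht₀ fun a ha ha₀ =>
          volume_Icc_diff_Bset_le hΔ0.le hΔ1.le hΔn hα hm ha (ha₀.trans ht₀1)
    _ = ENNReal.ofReal (24 * t₀ ^ (1 + ((n : ℝ) - 2 * Δ) * α) * (m : ℝ) ^ (2 * Δ - n)) := by
        ring_nf
    _ ≤ _ := by gcongr

/-- for `1/(n-Δ) < α < 1/Δ` there is `c > 0`, depending only on `n`, `Δ`, `α`,
such that for every integer `m ≥ 2` and every `t₀ ∈ (0,1]`, the Lebesgue (outer) measure of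
`[0,t₀] \ ℬ_{m,α}` is at most `c·t₀^(1+(n-1-2Δ)α)·m^(1+2Δ-n)`. -/
theorem stmt6 (n : ℕ) (hn : 2 ≤ n) (Δ : ℝ) (hΔ0 : 0 < Δ) (hΔ1 : Δ < 1)
    (hΔ2 : n = 2 → Δ < 1 / 2) (α : ℝ) (hα1 : ((n : ℝ) - Δ)⁻¹ < α) (hα2 : α < Δ⁻¹) :
    ∃ c : ℝ, 0 < c ∧ ∀ m : ℤ, 2 ≤ m → ∀ t₀ : ℝ, t₀ ∈ Set.Ioc (0 : ℝ) 1 →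
      volume (Set.Icc (0 : ℝ) t₀ \ Bset n Δ m α) ≤
        ENNReal.ofReal (c * t₀ ^ (1 + ((n : ℝ) - 1 - 2 * Δ) * α) *
          (m : ℝ) ^ (1 + 2 * Δ - (n : ℝ))) :=
  stmt6_general n hn Δ hΔ0 hΔ1 hΔ2 α hα1
end

section
/- Let n ≥ 2 be an integer and let t = u/q be a rational number (u ∈ ℤ, q ∈ ℤ, q ≥ 1). Then for every real x the limit lim_{K→∞} Σ_{0<|k|≤K} e(t·k^n + x·k)/k exists, where the sum is over nonzero integers k with |k| ≤ K. -/
open Filter Finset MeasureTheory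

/-- `e(ξ) = exp(2πiξ)`. -/
noncomputable def ee (ξ : ℝ) : ℂ := Complex.exp (2 * Real.pi * Complex.I * ξ)

/-- The symmetric partial sum `S_K(t,x) = Σ_{0<|k|≤K} e(t·k^n + x·k)/k`. -/
noncomputable def SK (n : ℕ) (t x : ℝ) (K : ℕ) : ℂ :=
  ∑ k ∈ (Finset.Icc (-(K : ℤ)) (K : ℤ)).filter (· ≠ 0),
    ee (t * (k : ℝ) ^ n + x * (k : ℝ)) / (k : ℂ)

/-! For `t = u/q` the summand `F k = e(t k^n + x k)` satisfies `F (k + q) = e(xq) F k`, since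
`(k + q)^n ≡ k^n [ZMOD q]`. Pairing `k` with `-k` writes `S_K` as `∑_{k ≤ K} (F k - F (-k)) / k`,
and the numerators have bounded partial sums: if `e(xq) ≠ 1`, the sums of `F k` and of `F (-k)`
over blocks of length `q` form geometric progressions with ratio of modulus one; if `e(xq) = 1`,
`F` is `q`-periodic and `F k` and `F (-k)` have the same sum over a period. Dirichlet's test then
gives convergence. -/

theorem norm_geom_sum_le_of_norm_eq_one {𝕜 : Type*} [NormedDivisionRing 𝕜] {w : 𝕜}
    (hw : ‖w‖ = 1) (hw1 : w ≠ 1) (j : ℕ) :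
    ‖∑ i ∈ range j, w ^ i‖ ≤ 2 / ‖w - 1‖ := by
  have hpos : 0 < ‖w - 1‖ := norm_pos_iff.mpr (sub_ne_zero.mpr hw1)
  rw [geom_sum_eq hw1, norm_div]
  gcongr
  calc ‖w ^ j - 1‖ ≤ ‖w ^ j‖ + ‖(1 : 𝕜)‖ := norm_sub_le _ _
    _ = 2 := by rw [norm_pow, hw, one_pow, norm_one]; norm_num

section QuasiPeriodic

variable {R E : Type*} [Semiring R] [NormedAddCommGroup E] [Module R E]
  {g : ℕ → E} {w : R} {p : ℕ}

theorem apply_add_mul_of_quasiperiodic (hg : ∀ i, g (i + p) = w • g i) (i j : ℕ) :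
    g (i + p * j) = w ^ j • g i := by
  induction j with
  | zero => simp
  | succ j ih => rw [mul_add_one, ← add_assoc, hg, ih, smul_smul, pow_succ']

theorem sum_range_mul_of_quasiperiodic (hg : ∀ i, g (i + p) = w • g i) (j : ℕ) :
    ∑ i ∈ range (p * j), g i = (∑ i ∈ range j, w ^ i) • ∑ i ∈ range p, g i := by
  induction j with
  | zero => simp
  | succ j ih =>
    rw [mul_add_one, sum_range_add, ih, sum_range_succ, add_smul]
    congr 1
    rw [smul_sum]
    exact sum_congr rfl fun i _ => by rw [add_comm, apply_add_mul_of_quasiperiodic hg]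

theorem norm_sum_range_le_of_quasiperiodic (hp : 0 < p) (hg : ∀ i, g (i + p) = w • g i)
    {c D : ℝ} (hc : ∀ i, ‖g i‖ ≤ c)
    (hD : ∀ j, ‖(∑ i ∈ range j, w ^ i) • ∑ i ∈ range p, g i‖ ≤ D) (N : ℕ) :
    ‖∑ i ∈ range N, g i‖ ≤ D + p * c := by
  have hc0 : 0 ≤ c := (norm_nonneg _).trans (hc 0)
  have hrest : ‖∑ i ∈ range (N % p), g (p * (N / p) + i)‖ ≤ p * c := by
    calc _ ≤ ∑ i ∈ range (N % p), c := norm_sum_le_of_le _ fun i _ => hc _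
      _ = (N % p : ℕ) * c := by rw [sum_const, card_range, nsmul_eq_mul]
      _ ≤ p * c := by gcongr; exact (Nat.mod_lt N hp).le
  rw [← Nat.div_add_mod N p, sum_range_add, sum_range_mul_of_quasiperiodic hg]
  exact (norm_add_le _ _).trans (add_le_add (hD _) hrest)

end QuasiPeriodic

theorem exists_norm_sum_range_le_of_quasiperiodic {𝕜 E : Type*} [NormedField 𝕜]
    [NormedAddCommGroup E] [NormedSpace 𝕜 E] {g : ℕ → E} {w : 𝕜} {p : ℕ} (hp : 0 < p)
    (hg : ∀ i, g (i + p) = w • g i) (hw : ‖w‖ = 1) (hw1 : w ≠ 1) {c : ℝ}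
    (hc : ∀ i, ‖g i‖ ≤ c) : ∃ B, ∀ N, ‖∑ i ∈ range N, g i‖ ≤ B := by
  refine ⟨2 / ‖w - 1‖ * ‖∑ i ∈ range p, g i‖ + p * c,
    norm_sum_range_le_of_quasiperiodic hp hg hc fun j => ?_⟩
  rw [norm_smul]
  gcongr
  exact norm_geom_sum_le_of_norm_eq_one hw hw1 j

theorem norm_sum_range_le_of_periodic {E : Type*} [NormedAddCommGroup E] {g : ℕ → E} {p : ℕ}
    (hp : 0 < p) (hg : ∀ i, g (i + p) = g i) (hsum : ∑ i ∈ range p, g i = 0) {c : ℝ}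
    (hc : ∀ i, ‖g i‖ ≤ c) (N : ℕ) : ‖∑ i ∈ range N, g i‖ ≤ p * c := by
  simpa using norm_sum_range_le_of_quasiperiodic (w := (1 : ℕ)) hp (by simpa using hg) hc
    (D := 0) (by simp [hsum]) N

theorem Function.Periodic.sum_range_add {E : Type*} [AddCancelCommMonoid E] {F : ℤ → E}
    {q : ℕ} (hF : Function.Periodic F q) (a : ℤ) :
    ∑ i ∈ range q, F (a + i) = ∑ i ∈ range q, F i := by
  have step : ∀ a : ℤ, ∑ i ∈ range q, F (a + 1 + i) = ∑ i ∈ range q, F (a + i) := by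
    intro a
    have h := (sum_range_succ (fun i => F (a + i)) q).symm.trans
      (sum_range_succ' (fun i => F (a + i)) q)
    push_cast at h
    rw [hF, add_zero, add_left_inj] at h
    simpa only [add_assoc, add_comm (1 : ℤ)] using h.symm
  induction a using Int.induction_on with
  | zero => simp
  | succ a ih => rw [step, ih]
  | pred a ih => rw [← ih, ← step, sub_add_cancel]

theorem Function.Periodic.sum_range_neg {E : Type*} [AddCancelCommMonoid E] {F : ℤ → E}
    {q : ℕ} (hF : Function.Periodic F q) :
    ∑ i ∈ range q, F (-(i + 1)) = ∑ i ∈ range q, F (i + 1) := by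
  have hreflect : ∑ i ∈ range q, F (-(i + 1)) = ∑ i ∈ range q, F (-q + i) := by
    rw [← sum_range_reflect]
    exact sum_congr rfl fun i hi => by
      rw [mem_range] at hi
      congr 1
      omega
  rw [hreflect, hF.sum_range_add, ← hF.sum_range_add 1]
  simp_rw [add_comm (1 : ℤ)]

theorem exists_norm_sum_range_sub_neg_le_of_quasiperiodic {𝕜 E : Type*} [NormedField 𝕜]
    [NormedAddCommGroup E] [NormedSpace 𝕜 E] {F : ℤ → E} {w : 𝕜} {q : ℕ} (hq : 0 < q)
    (hF : ∀ k, F (k + q) = w • F k) (hw : ‖w‖ = 1) {c : ℝ} (hc : ∀ k, ‖F k‖ ≤ c) :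
    ∃ B, ∀ N, ‖∑ i ∈ range N, (F (i + 1) - F (-(i + 1)))‖ ≤ B := by
  have hshift : ∀ i : ℕ, ((i + q : ℕ) : ℤ) + 1 = (i + 1 : ℤ) + q := fun i => by push_cast; ring
  have hnorm : ∀ i : ℕ, ‖F (i + 1) - F (-(i + 1))‖ ≤ 2 * c := fun i =>
    (norm_sub_le _ _).trans (by linarith [hc (i + 1), hc (-(i + 1))])
  by_cases hw1 : w = 1
  · have hper : Function.Periodic F q := fun k => by rw [hF, hw1, one_smul]
    refine ⟨q * (2 * c), norm_sum_range_le_of_periodic hq (fun i => ?_) ?_ hnorm⟩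
    · rw [hshift, neg_add, hper.neg, hper]
    · rw [sum_sub_distrib, hper.sum_range_neg, sub_self]
  · have hw0 : w ≠ 0 := norm_ne_zero_iff.mp (by simp [hw])
    have hneg : ∀ k, F (-(k + q)) = w⁻¹ • F (-k) := fun k => by
      rw [eq_inv_smul_iff₀ hw0, ← hF]
      ring_nf
    obtain ⟨B₁, hB₁⟩ := exists_norm_sum_range_le_of_quasiperiodic (g := fun i : ℕ => F (i + 1))
      hq (fun i => by rw [hshift, hF]) hw hw1 (fun i => hc _)
    obtain ⟨B₂, hB₂⟩ := exists_norm_sum_range_le_of_quasiperiodic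
      (g := fun i : ℕ => F (-(i + 1))) hq (fun i => by rw [hshift, hneg])
      (by rw [norm_inv, hw, inv_one]) (inv_ne_one.mpr hw1) (fun i => hc _)
    exact ⟨B₁ + B₂, fun N => by
      rw [sum_sub_distrib]; exact (norm_sub_le _ _).trans (add_le_add (hB₁ N) (hB₂ N))⟩

theorem ee_add (a b : ℝ) : ee (a + b) = ee a * ee b := by
  rw [ee, ee, ee, ← Complex.exp_add]
  push_cast
  ring_nf

theorem ee_intCast (m : ℤ) : ee m = 1 := by
  rw [ee, ← Complex.exp_int_mul_two_pi_mul_I m]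
  push_cast
  ring_nf

theorem norm_ee (ξ : ℝ) : ‖ee ξ‖ = 1 := by
  rw [ee, Complex.norm_exp]
  simp

noncomputable def phase (n : ℕ) (t x : ℝ) (k : ℤ) : ℂ := ee (t * (k : ℝ) ^ n + x * k)

theorem norm_phase (n : ℕ) (t x : ℝ) (k : ℤ) : ‖phase n t x k‖ = 1 := norm_ee _

theorem phase_add_period (n : ℕ) (u : ℤ) {q : ℤ} (hq : q ≠ 0) (x : ℝ) (k : ℤ) :
    phase n (u / q) x (k + q) = ee (x * q) * phase n (u / q) x k := by
  obtain ⟨s, hs⟩ : q ∣ (k + q) ^ n - k ^ n := by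
    simpa using (Int.ModEq.pow n (Int.add_mul_emod_self_left k q 1).symm).dvd
  have hsR : ((k : ℝ) + q) ^ n = (k : ℝ) ^ n + q * s := by
    rw [← sub_eq_iff_eq_add']
    exact_mod_cast hs
  have harg : (u / q : ℝ) * ((k + q : ℤ) : ℝ) ^ n + x * ((k + q : ℤ) : ℝ)
      = ((u * s : ℤ) : ℝ) + x * q + ((u / q : ℝ) * (k : ℝ) ^ n + x * k) := by
    push_cast
    rw [hsR]
    field_simp
    ring
  rw [phase, phase, harg, ee_add, ee_add, ee_intCast, one_mul]

theorem SK_eq_sum_range (n : ℕ) (t x : ℝ) (K : ℕ) :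
    SK n t x K = ∑ i ∈ range K,
      (1 / ((i : ℝ) + 1)) • (phase n t x (i + 1) - phase n t x (-(i + 1))) := by
  induction K with
  | zero => simp [SK, filter_singleton]
  | succ K ih =>
    have hset : (Icc (-((K + 1 : ℕ) : ℤ)) (K + 1 : ℕ)).filter (· ≠ 0) =
        insert ((K : ℤ) + 1) (insert (-((K : ℤ) + 1)) ((Icc (-(K : ℤ)) K).filter (· ≠ 0))) := by
      ext k
      simp only [mem_filter, mem_Icc, mem_insert]
      omega
    rw [sum_range_succ, ← ih, SK, SK, hset, sum_insert (by simp; omega), sum_insert (by simp)]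
    simp only [phase, Complex.real_smul]
    push_cast
    rw [div_neg]
    ring

theorem stmt7_general (n : ℕ) (u q : ℤ) (hq : 1 ≤ q) (x : ℝ) :
    ∃ L : ℂ, Tendsto (fun K : ℕ => SK n ((u : ℝ) / (q : ℝ)) x K) atTop (nhds L) := by
  lift q to ℕ using by omega
  obtain ⟨B, hB⟩ := exists_norm_sum_range_sub_neg_le_of_quasiperiodic
    (F := phase n (u / ((q : ℤ) : ℝ)) x) (w := ee (x * q)) (by omega)
    (fun k => phase_add_period n u (by omega) x k) (norm_ee _) (fun k => (norm_phase n _ x k).le)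
  have hanti : Antitone fun i : ℕ => 1 / ((i : ℝ) + 1) := fun _ _ => Nat.one_div_le_one_div
  obtain ⟨L, hL⟩ := cauchySeq_tendsto_of_complete
    (hanti.cauchySeq_series_mul_of_tendsto_zero_of_bounded
      tendsto_one_div_add_atTop_nhds_zero_nat hB)
  exact ⟨L, by simpa only [SK_eq_sum_range] using hL⟩

/-- for rational `t = u/q` the limit of the symmetric partial sums
`S_K(t,x)` exists for every real `x`. -/
theorem stmt7 (n : ℕ) (hn : 2 ≤ n) (u q : ℤ) (hq : 1 ≤ q) (x : ℝ) :
    ∃ L : ℂ, Tendsto (fun K : ℕ => SK n ((u : ℝ) / (q : ℝ)) x K) atTop (nhds L) :=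
  stmt7_general n u q hq x
end
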